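/- arXiv:1211.2878 — 5 statements merged into one kernel-verified Lean document; each statement's English description precedes it below -/
import Mathlib

section
/- Let 0 < λ < 1 and define the sequence t₀ = e^{λ e^{-λ}}, t_{n+1} = (e^{λ e^{-λ}})^{t_n} (the tetration tower f[e^{λ e^{-λ}}, n+1] with base b = e^{λ e^{-λ}}). Then t_n converges to e^{λ} as n → ∞. -/
theorem tetration_tendsto_exp (lam : ℝ) (h0 : 0 < lam) (h1 : lam < 1)
    (t : ℕ → ℝ)
    (ht0 : t 0 = Real.exp (lam * Real.exp (-lam)))
    (ht : ∀ n : ℕ, t (n + 1) = Real.exp (lam * Real.exp (-lam)) ^ (t n)) :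
    Filter.Tendsto t Filter.atTop (nhds (Real.exp lam)) := by
  set c : ℝ := lam * Real.exp (-lam) with hc
  have hce : c * Real.exp lam = lam := by
    rw [hc]; rw [mul_assoc, ← Real.exp_add]; simp
  have hrec : ∀ n, t (n + 1) = Real.exp (c * t n) := by
    intro n
    rw [ht n, Real.rpow_def_of_pos (Real.exp_pos _), Real.log_exp]
  have hcpos : 0 < c := mul_pos h0 (Real.exp_pos _)
  -- key contraction step: if x ≤ exp lam then
  -- 0 ≤ exp lam - exp (c x) ≤ lam * (exp lam - x)
  have key : ∀ x : ℝ, x ≤ Real.exp lam →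
      Real.exp (c * x) ≤ Real.exp lam ∧
      Real.exp lam - Real.exp (c * x) ≤ lam * (Real.exp lam - x) := by
    intro x hx
    have hcx : c * x ≤ lam := by
      calc c * x ≤ c * Real.exp lam := by nlinarith
        _ = lam := hce
    constructor
    · exact Real.exp_le_exp.2 hcx
    · have h2 : 1 - (lam - c * x) ≤ Real.exp (-(lam - c * x)) := by
        have := Real.add_one_le_exp (-(lam - c * x)); linarith
      have h3 : Real.exp (c * x) = Real.exp lam * Real.exp (-(lam - c * x)) := by
        rw [← Real.exp_add]; ring_nf
      have hepos := Real.exp_pos lam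
      have h4 : Real.exp lam - Real.exp (c * x) ≤ Real.exp lam * (lam - c * x) := by
        rw [h3]; nlinarith
      calc Real.exp lam - Real.exp (c * x) ≤ Real.exp lam * (lam - c * x) := h4
        _ = lam * (Real.exp lam - x) := by
            have : Real.exp lam * (c * Real.exp lam - c * x) = lam * (Real.exp lam - x) := by
              nlinarith [hce]
            nlinarith [hce]
  -- all t n ≤ exp lam and error bound
  have hle : ∀ n, t n ≤ Real.exp lam := by
    intro n
    induction n with
    | zero =>
        rw [ht0, Real.exp_le_exp, hc]
        nlinarith [Real.exp_le_one_iff.2 (by linarith : -lam ≤ 0), Real.exp_pos (-lam)]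
    | succ n ih =>
        rw [hrec n]; exact (key (t n) ih).1
  have herr : ∀ n, Real.exp lam - t n ≤ lam ^ n * (Real.exp lam - t 0) := by
    intro n
    induction n with
    | zero => simp
    | succ n ih =>
        have h5 := (key (t n) (hle n)).2
        rw [hrec n] at *
        calc Real.exp lam - Real.exp (c * t n) ≤ lam * (Real.exp lam - t n) := h5
          _ ≤ lam * (lam ^ n * (Real.exp lam - t 0)) := by nlinarith
          _ = lam ^ (n + 1) * (Real.exp lam - t 0) := by ring
  have hnn : ∀ n, 0 ≤ Real.exp lam - t n := fun n => by linarith [hle n]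
  -- squeeze
  have hgeo : Filter.Tendsto (fun n => lam ^ n * (Real.exp lam - t 0))
      Filter.atTop (nhds 0) := by
    have := (tendsto_pow_atTop_nhds_zero_of_lt_one h0.le h1).mul_const
      (Real.exp lam - t 0)
    simpa using this
  have hdiff : Filter.Tendsto (fun n => Real.exp lam - t n) Filter.atTop (nhds 0) := by
    apply squeeze_zero hnn herr hgeo
  have := hdiff.const_sub (Real.exp lam)
  simpa using this
end

section
/- Let 0 < λ < 1, b = e^{λ e^{-λ}}, and define t_n by t_1 = b, t_{n+1} = b^{t_n}. Then the convergence t_n → e^{λ} is linear with rate λ: there exists a constant C > 0 such that |t_{n+1} − e^{λ}| ≤ C·λ·|t_n − e^{λ}| for all n, and consequently |t_n − e^{λ}| ≤ C^{n} λ^{n−1} |t_1 − e^{λ}|. -/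
theorem tetration_linear_convergence (lam : ℝ) (h0 : 0 < lam) (h1 : lam < 1)
    (t : ℕ → ℝ)
    (ht1 : t 1 = Real.exp (lam * Real.exp (-lam)))
    (ht : ∀ n : ℕ, 1 ≤ n → t (n + 1) = Real.exp (lam * Real.exp (-lam)) ^ (t n)) :
    ∃ C : ℝ, 0 < C ∧
      (∀ n : ℕ, 1 ≤ n → |t (n + 1) - Real.exp lam| ≤ C * lam * |t n - Real.exp lam|) ∧
      (∀ n : ℕ, 1 ≤ n →
        |t n - Real.exp lam| ≤ C ^ n * lam ^ (n - 1) * |t 1 - Real.exp lam|) := by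
  set a := lam * Real.exp (-lam) with ha
  set E := Real.exp lam with hE
  have haE : a * E = lam := by
    rw [ha, hE, mul_assoc, ← Real.exp_add]
    simp
  have hrpow : ∀ x : ℝ, Real.exp a ^ x = Real.exp (a * x) := by
    intro x
    rw [Real.rpow_def_of_pos (Real.exp_pos _), Real.log_exp]
  -- iterates stay ≤ E
  have hle : ∀ n : ℕ, 1 ≤ n → t n ≤ E := by
    intro n hn
    induction n with
    | zero => omega
    | succ m ih =>
      rcases Nat.eq_or_lt_of_le hn with h | h
      · rw [← h, ht1, hE]
        apply Real.exp_le_exp.mpr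
        nlinarith [Real.exp_pos (-lam), Real.exp_le_one_iff.mpr (le_of_lt (neg_neg_iff_pos.mpr h0))]
      · have hm : 1 ≤ m := by omega
        rw [ht m hm, hrpow]
        calc Real.exp (a * t m) ≤ Real.exp (a * E) := by
              apply Real.exp_le_exp.mpr
              have := ih hm
              have hapos : 0 < a := mul_pos h0 (Real.exp_pos _)
              nlinarith
          _ = E := by rw [haE]
  -- key step bound
  have hstep : ∀ n : ℕ, 1 ≤ n → |t (n + 1) - E| ≤ lam * |t n - E| := by
    intro n hn
    have htn : t n ≤ E := hle n hn
    have htn1 : t (n + 1) ≤ E := hle (n + 1) (by omega)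
    rw [abs_sub_comm, abs_of_nonneg (by linarith), abs_sub_comm, abs_of_nonneg (by linarith)]
    rw [ht n hn, hrpow]
    have hEe : E = Real.exp (a * E) := by rw [haE]
    have key : Real.exp (a * E) - Real.exp (a * t n) ≤ Real.exp (a * E) * (a * E - a * t n) := by
      have h2 := Real.add_one_le_exp (a * t n - a * E)
      have h3 : Real.exp (a * t n) = Real.exp (a * E) * Real.exp (a * t n - a * E) := by
        rw [← Real.exp_add]; ring_nf
      nlinarith [Real.exp_pos (a * E)]
    calc E - Real.exp (a * t n) = Real.exp (a * E) - Real.exp (a * t n) := by rw [← hEe]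
      _ ≤ Real.exp (a * E) * (a * E - a * t n) := key
      _ = (a * E) * (E - t n) := by rw [← hEe]; ring
      _ = lam * (E - t n) := by rw [haE]
  refine ⟨1, one_pos, ?_, ?_⟩
  · intro n hn
    simpa using hstep n hn
  · intro n hn
    induction n with
    | zero => omega
    | succ m ih =>
      rcases Nat.eq_or_lt_of_le hn with h | h
      · rw [← h]
        simp
      · have hm : 1 ≤ m := by omega
        have h2 := ih hm
        calc |t (m + 1) - E| ≤ lam * |t m - E| := hstep m hm
          _ ≤ lam * (1 ^ m * lam ^ (m - 1) * |t 1 - E|) := by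
              apply mul_le_mul_of_nonneg_left h2 (le_of_lt h0)
          _ = 1 ^ (m + 1) * lam ^ (m + 1 - 1) * |t 1 - E| := by
              rw [one_pow, one_pow, one_mul, one_mul]
              have : m + 1 - 1 = (m - 1) + 1 := by omega
              rw [this, pow_succ]
              ring
end

section
/- Let 0 < λ < 1 and define f_0 = 0, f_{n+1} = e^{-λ(1−f_n)}. Then there is a constant c > 0 (depending only on λ) such that 1 − f_n ≥ c λ^{n} for all n ≥ 0. Hence the survival probability P(Y > n) = 1 − f_n of a subcritical Poisson(λ) branching process is bounded below by a positive constant times λ^n. -/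
theorem survival_prob_ge_geometric (lam : ℝ) (h0 : 0 < lam) (h1 : lam < 1)
    (f : ℕ → ℝ) (hf0 : f 0 = 0)
    (hrec : ∀ n : ℕ, f (n + 1) = Real.exp (-lam * (1 - f n))) :
    ∃ c : ℝ, 0 < c ∧ ∀ n : ℕ, c * lam ^ n ≤ 1 - f n := by
  -- upper bound and nonnegativity: 0 ≤ 1 - f n ≤ lam ^ n
  have hub : ∀ n : ℕ, 1 - f n ≤ lam ^ n ∧ 0 ≤ 1 - f n := by
    intro n
    induction n with
    | zero => simp [hf0]
    | succ n ih =>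
      obtain ⟨ih1, ih2⟩ := ih
      have hx : 0 ≤ lam * (1 - f n) := mul_nonneg h0.le ih2
      have hexp : Real.exp (-lam * (1 - f n)) = Real.exp (-(lam * (1 - f n))) := by
        ring_nf
      constructor
      · rw [hrec, hexp]
        have h := Real.add_one_le_exp (-(lam * (1 - f n)))
        have hstep : 1 - Real.exp (-(lam * (1 - f n))) ≤ lam * (1 - f n) := by linarith
        have : lam * (1 - f n) ≤ lam * lam ^ n :=
          mul_le_mul_of_nonneg_left ih1 h0.le
        calc 1 - Real.exp (-(lam * (1 - f n))) ≤ lam * (1 - f n) := hstep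
          _ ≤ lam * lam ^ n := this
          _ = lam ^ (n + 1) := by ring
      · rw [hrec, hexp]
        have : Real.exp (-(lam * (1 - f n))) ≤ 1 := Real.exp_le_one_iff.mpr (by linarith)
        linarith
  -- the partial sums
  set S : ℕ → ℝ := fun n => ∑ k ∈ Finset.range n, lam ^ (k + 1) with hS
  have hSsucc : ∀ n, S (n + 1) = S n + lam ^ (n + 1) := by
    intro n; simp [hS, Finset.sum_range_succ]
  have hSbound : ∀ n, S n ≤ lam / (1 - lam) := by
    intro n
    have hlam1 : lam ≠ 1 := ne_of_lt h1
    have hgeom : ∑ k ∈ Finset.range n, lam ^ k = (lam ^ n - 1) / (lam - 1) :=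
      geom_sum_eq hlam1 n
    have hpow : 0 ≤ lam ^ n := pow_nonneg h0.le n
    have : S n = lam * ∑ k ∈ Finset.range n, lam ^ k := by
      simp [hS, Finset.mul_sum, pow_succ, mul_comm]
    rw [this, hgeom]
    have hne : lam - 1 ≠ 0 := by linarith
    have hne2 : (1:ℝ) - lam ≠ 0 := by linarith
    rw [show lam * ((lam ^ n - 1) / (lam - 1)) = lam * (1 - lam ^ n) / (1 - lam) by
      field_simp; ring]
    rw [div_le_div_iff₀ (by linarith) (by linarith)]
    nlinarith [mul_nonneg (mul_nonneg h0.le (by linarith : (0:ℝ) ≤ 1 - lam)) hpow]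
  -- lower bound: lam^n * exp(-(S n)) ≤ 1 - f n
  have hlb : ∀ n : ℕ, lam ^ n * Real.exp (-(S n)) ≤ 1 - f n := by
    intro n
    induction n with
    | zero => simp [hS, hf0]
    | succ n ih =>
      have hub1 := (hub n).1
      have hub2 := (hub n).2
      set x := lam * (1 - f n) with hx
      have hx0 : 0 ≤ x := mul_nonneg h0.le hub2
      have hxle : x ≤ lam ^ (n + 1) := by
        calc x ≤ lam * lam ^ n := mul_le_mul_of_nonneg_left hub1 h0.le
          _ = lam ^ (n + 1) := by ring
      -- key: x * exp(-x) ≤ 1 - exp(-x)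
      have hkey : x * Real.exp (-x) ≤ 1 - Real.exp (-x) := by
        have h := Real.add_one_le_exp x
        have hmul : Real.exp (-x) * (x + 1) ≤ Real.exp (-x) * Real.exp x :=
          mul_le_mul_of_nonneg_left h (Real.exp_pos _).le
        rw [← Real.exp_add] at hmul
        simp at hmul
        linarith
      have hexp : Real.exp (-lam * (1 - f n)) = Real.exp (-x) := by rw [hx]; ring_nf
      rw [hrec, hexp]
      -- exp(-x) ≥ exp(-(lam^(n+1)))
      have hmono : Real.exp (-(lam ^ (n + 1))) ≤ Real.exp (-x) :=
        Real.exp_le_exp.mpr (by linarith)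
      have h2 : x * Real.exp (-(lam ^ (n + 1))) ≤ x * Real.exp (-x) :=
        mul_le_mul_of_nonneg_left hmono hx0
      have h3 : lam * (lam ^ n * Real.exp (-(S n))) ≤ x := by
        rw [hx]
        exact mul_le_mul_of_nonneg_left ih h0.le
      have hE : (0:ℝ) < Real.exp (-(lam ^ (n + 1))) := Real.exp_pos _
      have h4 : lam * (lam ^ n * Real.exp (-(S n))) * Real.exp (-(lam ^ (n + 1)))
          ≤ x * Real.exp (-(lam ^ (n + 1))) :=
        mul_le_mul_of_nonneg_right h3 hE.le
      have heq : lam ^ (n + 1) * Real.exp (-(S (n + 1)))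
          = lam * (lam ^ n * Real.exp (-(S n))) * Real.exp (-(lam ^ (n + 1))) := by
        rw [hSsucc, neg_add, Real.exp_add]; ring
      rw [heq]
      linarith
  refine ⟨Real.exp (-(lam / (1 - lam))), Real.exp_pos _, fun n => ?_⟩
  have h5 : Real.exp (-(lam / (1 - lam))) ≤ Real.exp (-(S n)) :=
    Real.exp_le_exp.mpr (by linarith [hSbound n])
  have h6 : Real.exp (-(lam / (1 - lam))) * lam ^ n ≤ Real.exp (-(S n)) * lam ^ n :=
    mul_le_mul_of_nonneg_right h5 (pow_nonneg h0.le n)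
  calc Real.exp (-(lam / (1 - lam))) * lam ^ n ≤ Real.exp (-(S n)) * lam ^ n := h6
    _ = lam ^ n * Real.exp (-(S n)) := by ring
    _ ≤ 1 - f n := hlb n
end

section
/- Let 0 < λ < 1 and f_n the extinction CDF of a Poisson(λ) Galton–Watson process (f_0 = 0, f_{n+1} = e^{−λ(1−f_n)}). Then for all n ≥ 1, f_n = e^{−λ}·f[e^{λ e^{−λ}}, n], where f[b,k] is the tetration with base b (f[b,1] = b, f[b,k+1] = b^{f[b,k]}). -/
theorem extinction_cdf_tetration (lam : ℝ) (h0 : 0 < lam) (h1 : lam < 1)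
    (f : ℕ → ℝ) (hf0 : f 0 = 0)
    (hrec : ∀ n : ℕ, f (n + 1) = Real.exp (-lam * (1 - f n)))
    (t : ℕ → ℝ)
    (ht1 : t 1 = Real.exp (lam * Real.exp (-lam)))
    (ht : ∀ n : ℕ, 1 ≤ n → t (n + 1) = Real.exp (lam * Real.exp (-lam)) ^ (t n)) :
    ∀ n : ℕ, 1 ≤ n → f (n + 1) = Real.exp (-lam) * t n := by
  intro n hn
  induction n with
  | zero => omega
  | succ m ih =>
    rcases Nat.eq_zero_or_pos m with hm | hm
    · subst hm
      rw [hrec, hrec, hf0, ht1, ← Real.exp_add]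
      ring_nf
    · rw [hrec, ih hm, ht m hm,
        Real.rpow_def_of_pos (Real.exp_pos _), Real.log_exp, ← Real.exp_add]
      ring_nf
end

section
/- Let 0 < λ < 1 and f_0 = 0, f_{n+1} = e^{−λ(1−f_n)}. Then the sequence g_n = (1 − f_n)/λ^n is monotone and converges to a positive limit; equivalently, 1 − f_n ∼ c·λ^n for some constant c ∈ (0, 1] as n → ∞. -/
theorem kolmogorov_yaglom (lam : ℝ) (h0 : 0 < lam) (h1 : lam < 1)
    (f : ℕ → ℝ) (hf0 : f 0 = 0)
    (hrec : ∀ n : ℕ, f (n + 1) = Real.exp (-lam * (1 - f n))) :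
    Antitone (fun n : ℕ => (1 - f n) / lam ^ n) ∧
    ∃ c : ℝ, 0 < c ∧ c ≤ 1 ∧
      Filter.Tendsto (fun n : ℕ => (1 - f n) / lam ^ n) Filter.atTop (nhds c) := by
  set G : ℕ → ℝ := fun n : ℕ => (1 - f n) / lam ^ n with hG
  have hpow : ∀ n : ℕ, (0:ℝ) < lam ^ n := fun n => pow_pos h0 n
  have hf_lt : ∀ n, 0 ≤ f n ∧ f n < 1 := by
    intro n
    induction n with
    | zero => simp [hf0]
    | succ n ih =>
      rw [hrec]
      refine ⟨(Real.exp_pos _).le, ?_⟩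
      have hx : -lam * (1 - f n) < 0 := by nlinarith [ih.1, ih.2]
      calc Real.exp (-lam * (1 - f n)) < Real.exp 0 := Real.exp_lt_exp.mpr hx
        _ = 1 := Real.exp_zero
  have hstep_le : ∀ n, 1 - f (n + 1) ≤ lam * (1 - f n) := by
    intro n
    rw [hrec]
    have := Real.add_one_le_exp (-lam * (1 - f n))
    linarith
  have hanti : Antitone G := by
    apply antitone_nat_of_succ_le
    intro n
    show (1 - f (n + 1)) / lam ^ (n + 1) ≤ (1 - f n) / lam ^ n
    rw [pow_succ, div_le_div_iff₀ (by positivity) (hpow n)]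
    have h := hstep_le n
    nlinarith [hpow n]
  have hG0 : G 0 = 1 := by simp [hG, hf0]
  have hupper : ∀ n, 1 - f n ≤ lam ^ n := by
    intro n
    have h := hanti (Nat.zero_le n)
    rw [hG0] at h
    have := (div_le_one (hpow n)).mp h
    linarith
  have key : ∀ n, G n * Real.exp (-lam ^ (n + 1)) ≤ G (n + 1) := by
    intro n
    have hx0 : 0 ≤ lam * (1 - f n) := mul_nonneg h0.le (by linarith [(hf_lt n).2])
    have hxle : lam * (1 - f n) ≤ lam ^ (n + 1) := by
      have := hupper n
      rw [pow_succ]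
      nlinarith
    set x := lam * (1 - f n) with hxdef
    have hE := Real.add_one_le_exp x
    have h1' : x * Real.exp (-x) ≤ 1 - Real.exp (-x) := by
      rw [Real.exp_neg]
      nlinarith [Real.exp_pos x, mul_inv_cancel₀ (Real.exp_ne_zero x)]
    have h2' : Real.exp (-lam ^ (n + 1)) ≤ Real.exp (-x) :=
      Real.exp_le_exp.mpr (by linarith)
    have hxeq : -lam * (1 - f n) = -x := by rw [hxdef]; ring
    show (1 - f n) / lam ^ n * Real.exp (-lam ^ (n + 1)) ≤ (1 - f (n + 1)) / lam ^ (n + 1)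
    rw [hrec, hxeq, pow_succ, div_mul_eq_mul_div, div_le_div_iff₀ (hpow n) (by positivity)]
    have h3 : x * Real.exp (-lam ^ (n + 1)) ≤ x * Real.exp (-x) :=
      mul_le_mul_of_nonneg_left h2' hx0
    -- goal: (1 - f n) * exp(-lam^(n+1)) * (lam^n * lam) ≤ (1 - exp (-x)) * lam^n
    have h4 : x * Real.exp (-lam ^ (n + 1)) ≤ 1 - Real.exp (-x) := le_trans h3 h1'
    rw [pow_succ] at h4
    have h5 : lam * (1 - f n) * Real.exp (-(lam ^ n * lam)) ≤ 1 - Real.exp (-x) := h4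
    linarith [mul_le_mul_of_nonneg_left h5 (hpow n).le]
  have hsum : ∀ n, Real.exp (-(∑ k ∈ Finset.range n, lam ^ (k + 1))) ≤ G n := by
    intro n
    induction n with
    | zero => simp [hG0]
    | succ n ih =>
      have : Real.exp (-(∑ k ∈ Finset.range (n + 1), lam ^ (k + 1)))
          = Real.exp (-(∑ k ∈ Finset.range n, lam ^ (k + 1))) * Real.exp (-lam ^ (n + 1)) := by
        rw [← Real.exp_add, Finset.sum_range_succ]; congr 1; ring
      rw [this]
      calc Real.exp (-(∑ k ∈ Finset.range n, lam ^ (k + 1))) * Real.exp (-lam ^ (n + 1))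
          ≤ G n * Real.exp (-lam ^ (n + 1)) :=
            mul_le_mul_of_nonneg_right ih (Real.exp_pos _).le
        _ ≤ G (n + 1) := key n
  have hlow : ∀ n, Real.exp (-(lam / (1 - lam))) ≤ G n := by
    intro n
    refine le_trans (Real.exp_le_exp.mpr ?_) (hsum n)
    have hgeom : ∑ k ∈ Finset.range n, lam ^ k ≤ 1 / (1 - lam) := by
      rw [geom_sum_eq (ne_of_lt h1) n,
        show lam ^ n - 1 = -(1 - lam ^ n) by ring,
        show lam - 1 = -(1 - lam) by ring, neg_div_neg_eq,
        div_le_div_iff₀ (by linarith) (by linarith)]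
      nlinarith [(hpow n).le]
    have : ∑ k ∈ Finset.range n, lam ^ (k + 1) = lam * ∑ k ∈ Finset.range n, lam ^ k := by
      rw [Finset.mul_sum]
      exact Finset.sum_congr rfl fun k _ => by rw [pow_succ]; ring
    rw [this]
    have := mul_le_mul_of_nonneg_left hgeom h0.le
    have heq : lam * (1 / (1 - lam)) = lam / (1 - lam) := by ring
    linarith [heq ▸ this]
  refine ⟨hanti, ⟨⨅ n, G n, ?_, ?_, ?_⟩⟩
  · have hb : BddBelow (Set.range G) := ⟨Real.exp (-(lam / (1 - lam))), by
      rintro y ⟨n, rfl⟩; exact hlow n⟩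
    calc (0:ℝ) < Real.exp (-(lam / (1 - lam))) := Real.exp_pos _
      _ ≤ ⨅ n, G n := le_ciInf hlow
  · calc ⨅ n, G n ≤ G 0 := ciInf_le ⟨Real.exp (-(lam / (1 - lam))), by
        rintro y ⟨n, rfl⟩; exact hlow n⟩ 0
      _ = 1 := hG0
  · exact tendsto_atTop_ciInf hanti ⟨Real.exp (-(lam / (1 - lam))), by
      rintro y ⟨n, rfl⟩; exact hlow n⟩
end
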